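/- In a stochastic BPA game with simple target set T, the complement winning region satisfies W_Diamond(T,=0) = (B\A)* ∪ (B\A)*(Γ\B)Γ*, where A = W_Box(T,>0) ∩ Γ and B = W_Box(T_ε,>0) ∩ Γ. -/

import Mathlib

open scoped Classical

/-- A stochastic BPA game: finite stack alphabet `Γ`, rules `X → α` with
`|α| ≤ 2`, symbols partitioned among player Box, player Diamond, and
probabilistic symbols, the latter carrying positive rational distributions
over their rules. -/
structure BPA (Γ : Type*) [Fintype Γ] where
  rule : Γ → List Γ → Prop
  rule_len : ∀ X α, rule X α → α.length ≤ 2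
  rule_total : ∀ X, ∃ α, rule X α
  isBox : Γ → Prop
  isDiamond : Γ → Prop
  isCirc : Γ → Prop
  cover : ∀ X, isBox X ∨ isDiamond X ∨ isCirc X
  disjBD : ∀ X, ¬ (isBox X ∧ isDiamond X)
  disjBC : ∀ X, ¬ (isBox X ∧ isCirc X)
  disjDC : ∀ X, ¬ (isDiamond X ∧ isCirc X)
  prob : Γ → List Γ → ℝ
  prob_nonneg : ∀ X α, 0 ≤ prob X α
  prob_rat : ∀ X α, ∃ q : ℚ, prob X α = (q : ℝ)
  prob_supp : ∀ X α, isCirc X → (0 < prob X α ↔ rule X α)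
  prob_sum : ∀ X, isCirc X → ∑' α, prob X α = 1

variable {Γ : Type*} [Fintype Γ]

/-- A history-dependent randomized strategy for the player owning the symbols
satisfying `own` in the stochastic game induced by a BPA game: to every history
(sequence of configurations) and current configuration `X :: β` with `own X`,
it assigns a probability distribution on the applicable rules. -/
structure BPA.Strat (Δ : BPA Γ) (own : Γ → Prop) where
  f : List (List Γ) → List Γ → List Γ → ℝ
  nonneg : ∀ w c α, 0 ≤ f w c α
  supp : ∀ w X β α, own X → f w (X :: β) α ≠ 0 → Δ.rule X α
  sum_one : ∀ w X β, own X → ∑' α, f w (X :: β) α = 1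

/-- The distribution on rules chosen at configuration `c` after history `w`. -/
noncomputable def BPA.choice (Δ : BPA Γ) (σ : Δ.Strat Δ.isBox)
    (π : Δ.Strat Δ.isDiamond) (w : List (List Γ)) (c : List Γ) (α : List Γ) : ℝ :=
  match c with
  | [] => 0
  | X :: _ => if Δ.isBox X then σ.f w c α else if Δ.isDiamond X then π.f w c α
      else Δ.prob X α

/-- One-step transition probability between configurations in the play
induced by a BPA game (the empty configuration `ε` loops with probability 1,
and `X :: β` moves to `α ++ β` for a rule `X → α`). -/
noncomputable def BPA.stepP (Δ : BPA Γ) (σ : Δ.Strat Δ.isBox)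
    (π : Δ.Strat Δ.isDiamond) (w : List (List Γ)) (c c' : List Γ) : ℝ :=
  match c with
  | [] => if c' = [] then 1 else 0
  | X :: β => ∑' α : List Γ,
      if α ++ β = c' ∧ Δ.rule X α then Δ.choice σ π w (X :: β) α else 0

/-- Probability of reaching `T` from configuration `c` within at most `n`
transitions, after history `w`. -/
noncomputable def BPA.reachN (Δ : BPA Γ) (σ : Δ.Strat Δ.isBox)
    (π : Δ.Strat Δ.isDiamond) (T : Set (List Γ)) :
    ℕ → List (List Γ) → List Γ → ℝ
  | 0, _, c => if c ∈ T then 1 else 0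
  | n+1, w, c => if c ∈ T then 1 else
      ∑' c', Δ.stepP σ π w c c' * BPA.reachN Δ σ π T n (w ++ [c]) c'

/-- Probability `P_c^{σ,π}(Reach(T))` of reaching `T` from configuration `c`. -/
noncomputable def BPA.reachP (Δ : BPA Γ) (σ : Δ.Strat Δ.isBox)
    (π : Δ.Strat Δ.isDiamond) (T : Set (List Γ)) (c : List Γ) : ℝ :=
  ⨆ n, Δ.reachN σ π T n [] c

/-- The winning region `W_Box(T, >0)`. -/
def BPA.WBoxPos (Δ : BPA Γ) (T : Set (List Γ)) : Set (List Γ) :=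
  {c | ∃ σ : Δ.Strat Δ.isBox, ∀ π : Δ.Strat Δ.isDiamond, 0 < Δ.reachP σ π T c}

/-- The winning region `W_Box(T, =1)`. -/
def BPA.WBoxOne (Δ : BPA Γ) (T : Set (List Γ)) : Set (List Γ) :=
  {c | ∃ σ : Δ.Strat Δ.isBox, ∀ π : Δ.Strat Δ.isDiamond, Δ.reachP σ π T c = 1}

/-- The winning region `W_Diamond(T, =0)`. -/
def BPA.WDiaZero (Δ : BPA Γ) (T : Set (List Γ)) : Set (List Γ) :=
  {c | ∃ π : Δ.Strat Δ.isDiamond, ∀ σ : Δ.Strat Δ.isBox, Δ.reachP σ π T c = 0}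

/-- The winning region `W_Diamond(T, <1)`. -/
def BPA.WDiaLtOne (Δ : BPA Γ) (T : Set (List Γ)) : Set (List Γ) :=
  {c | ∃ π : Δ.Strat Δ.isDiamond, ∀ σ : Δ.Strat Δ.isBox, Δ.reachP σ π T c < 1}

/-- The language `{[X] : X ∈ S}` of one-letter words over a set of symbols. -/
def symLang (S : Set Γ) : Language Γ := {c | ∃ X ∈ S, c = [X]}

/-- The simple set of target configurations `S·Γ*` determined by the set of
symbols `S`: membership depends only on the top stack symbol, and `ε ∉ S·Γ*`. -/
def topLang (S : Set Γ) : Language Γ := {c | ∃ X β, c = X :: β ∧ X ∈ S}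

/-!
Reaching `T` with probability `0` is a safety condition: from a state avoiding `T`, every move of
positive probability leads to a state avoiding `T`, and conversely any family of states outside
`T` closed under such moves avoids `T`. Since rules only rewrite the top symbol, a play from `Xγ`
is a play from `X` with `γ` appended, up to the moment the stack first shrinks to `γ`; strategies
transfer along this correspondence, and can be glued at that moment. This yields four closure
properties: `W◇(T,=0)` contains `Xγ` when it contains `X` and `γ`; `X ∈ A` gives
`Xγ ∈ W□(T,>0)`; `X ∈ B` and `γ ∈ W□(T,>0)` give `Xγ ∈ W□(T,>0)`; and `Xγ ∈ W□(T,>0)` forces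
`X ∈ B`. Reading a configuration from the top, its first symbol outside `B ∖ A` decides: if it
lies in `B` it lies in `A` and the configuration is in `W□(T,>0)`; otherwise, by determinacy, the
stack from that symbol down is in `W◇(T,=0)`, as is each symbol above it.
-/

section Language

omit [Fintype Γ]

variable {P Q S : Set Γ} {X : Γ} {β c : List Γ}

@[simp]
lemma cons_mem_topLang : X :: β ∈ topLang S ↔ X ∈ S :=
  ⟨fun ⟨_, _, h, hX⟩ => (List.cons.inj h).1 ▸ hX, fun h => ⟨X, β, rfl, h⟩⟩

@[simp]
lemma nil_not_mem_topLang : [] ∉ topLang S :=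
  fun ⟨_, _, h, _⟩ => List.cons_ne_nil _ _ h.symm

lemma forall_mem_map_append_ne {w : List (List Γ)} (hw : ∀ e ∈ w, e ≠ []) :
    ∀ e ∈ w.map (· ++ c), e ≠ c := by
  simp only [List.mem_map, forall_exists_index, and_imp, forall_apply_eq_imp_iff₂,
    Ne, List.append_left_eq_self]
  exact hw

lemma mem_kstar_symLang : c ∈ KStar.kstar (symLang P) ↔ ∀ x ∈ c, x ∈ P := by
  rw [Language.mem_kstar]
  constructor
  · rintro ⟨L, rfl, hL⟩ x hx
    obtain ⟨l, hl, hxl⟩ := List.mem_flatten.mp hx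
    obtain ⟨X, hX, rfl⟩ := hL l hl
    exact List.mem_singleton.mp hxl ▸ hX
  · intro h
    refine ⟨c.map ([·]), (List.flatMap_singleton' c).symm, ?_⟩
    simp only [List.mem_map, forall_exists_index, and_imp, forall_apply_eq_imp_iff₂]
    exact fun x hx => ⟨x, h x hx, rfl⟩

lemma mem_kstar_symLang_add_iff :
    c ∈ KStar.kstar (symLang P) + KStar.kstar (symLang P) * symLang Q * (⊤ : Language Γ) ↔
      (∀ x ∈ c, x ∈ P) ∨ ∃ u Y v, c = u ++ Y :: v ∧ (∀ x ∈ u, x ∈ P) ∧ Y ∈ Q := by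
  simp only [Language.mem_add, Language.mem_mul, mem_kstar_symLang]
  refine or_congr_right ⟨?_, ?_⟩
  · rintro ⟨_, ⟨u, hu, _, ⟨Y, hY, rfl⟩, rfl⟩, v, -, rfl⟩
    exact ⟨u, Y, v, by simp, hu, hY⟩
  · rintro ⟨u, Y, v, rfl, hu, hY⟩
    exact ⟨u ++ [Y], ⟨u, hu, [Y], ⟨Y, hY, rfl⟩, rfl⟩, v, trivial, by simp⟩

end Language

namespace BPA

variable (Δ : BPA Γ)

noncomputable def rules (X : Γ) : Finset (List Γ) :=
  ((List.finite_length_le Γ 2).subset fun α hα => Δ.rule_len X α hα).toFinset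

lemma mem_rules {X : Γ} {α : List Γ} : α ∈ Δ.rules X ↔ Δ.rule X α :=
  Set.Finite.mem_toFinset _

instance (own : Γ → Prop) : Nonempty (Δ.Strat own) :=
  ⟨{ f := fun _ c α => match c with
        | [] => 0
        | X :: _ => if α = (Δ.rule_total X).choose then 1 else 0
     nonneg := fun w c α => by
       rcases c with _ | ⟨X, β⟩
       · exact le_rfl
       · dsimp only; split_ifs <;> norm_num
     supp := fun w X β α _ h => by
       dsimp only at h
       split_ifs at h with hα
       · exact hα ▸ (Δ.rule_total X).choose_spec
       · exact absurd rfl h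
     sum_one := fun w X β _ => tsum_ite_eq _ _ }⟩

section Play

variable {σ σ' : Δ.Strat Δ.isBox} {π π' : Δ.Strat Δ.isDiamond} {T : Set (List Γ)}

lemma choice_nonneg (w : List (List Γ)) (c α : List Γ) : 0 ≤ Δ.choice σ π w c α := by
  rcases c with _ | ⟨X, β⟩
  · exact le_rfl
  · simp only [choice]
    split_ifs
    exacts [σ.nonneg .., π.nonneg .., Δ.prob_nonneg ..]

lemma tsum_choice (w : List (List Γ)) (X : Γ) (β : List Γ) :
    ∑' α, Δ.choice σ π w (X :: β) α = 1 := by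
  simp only [choice]
  split_ifs with hbox hdia
  · exact σ.sum_one w X β hbox
  · exact π.sum_one w X β hdia
  · exact Δ.prob_sum X ((Δ.cover X).resolve_left hbox |>.resolve_left hdia)

lemma choice_congr {w w' : List (List Γ)} {X : Γ} {β β' : List Γ}
    (hσ : ∀ α, σ.f w (X :: β) α = σ'.f w' (X :: β') α)
    (hπ : ∀ α, π.f w (X :: β) α = π'.f w' (X :: β') α) :
    Δ.choice σ π w (X :: β) = Δ.choice σ' π' w' (X :: β') := by
  funext α
  simp only [choice]
  split_ifs
  exacts [hσ α, hπ α, rfl]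

lemma stepP_append (w : List (List Γ)) {X : Γ} {α : List Γ} (β : List Γ) (h : Δ.rule X α) :
    Δ.stepP σ π w (X :: β) (α ++ β) = Δ.choice σ π w (X :: β) α := by
  simp only [stepP]
  rw [tsum_eq_single α fun α' hne => if_neg fun h' => hne (List.append_left_injective β h'.1),
    if_pos ⟨rfl, h⟩]

lemma stepP_eq_zero (w : List (List Γ)) {X : Γ} {β c : List Γ}
    (h : ∀ α, Δ.rule X α → α ++ β ≠ c) : Δ.stepP σ π w (X :: β) c = 0 := by
  simp only [stepP]
  exact (tsum_congr fun α => if_neg fun h' => h α h'.2 h'.1).trans tsum_zero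

lemma reachN_succ_cons {X : Γ} {β : List Γ} (hT : X :: β ∉ T) (n : ℕ) (w : List (List Γ)) :
    Δ.reachN σ π T (n + 1) w (X :: β) =
      ∑ α ∈ Δ.rules X,
        Δ.choice σ π w (X :: β) α * Δ.reachN σ π T n (w ++ [X :: β]) (α ++ β) := by
  rw [reachN, if_neg hT, tsum_eq_sum (s := (Δ.rules X).image (· ++ β)), Finset.sum_image]
  · exact Finset.sum_congr rfl fun α hα => by rw [Δ.stepP_append w β (Δ.mem_rules.mp hα)]
  · exact fun α _ α' _ h => List.append_left_injective β h
  · intro c hc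
    rw [Δ.stepP_eq_zero w fun α hα he => hc (Finset.mem_image.mpr ⟨α, Δ.mem_rules.mpr hα, he⟩),
      zero_mul]

lemma reachN_nil (n : ℕ) (w : List (List Γ)) :
    Δ.reachN σ π T n w [] = if [] ∈ T then 1 else 0 := by
  induction n generalizing w with
  | zero => rfl
  | succ n ih =>
    rw [reachN]
    split_ifs with h
    · rfl
    · rw [tsum_eq_single [] fun c hc => by rw [stepP, if_neg hc, zero_mul]]
      simp [stepP, ih, h]

lemma reachN_nonneg (n : ℕ) (w : List (List Γ)) (c : List Γ) : 0 ≤ Δ.reachN σ π T n w c := by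
  induction n generalizing w c with
  | zero => unfold reachN; split_ifs <;> norm_num
  | succ n ih =>
    rcases c with _ | ⟨X, β⟩
    · rw [reachN_nil]; split_ifs <;> norm_num
    by_cases hT : X :: β ∈ T
    · simp [reachN, hT]
    rw [Δ.reachN_succ_cons hT]
    exact Finset.sum_nonneg fun α _ => mul_nonneg (Δ.choice_nonneg ..) (ih ..)

lemma reachN_le_one (n : ℕ) (w : List (List Γ)) (c : List Γ) : Δ.reachN σ π T n w c ≤ 1 := by
  induction n generalizing w c with
  | zero => unfold reachN; split_ifs <;> norm_num
  | succ n ih =>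
    rcases c with _ | ⟨X, β⟩
    · rw [reachN_nil]; split_ifs <;> norm_num
    by_cases hT : X :: β ∈ T
    · simp [reachN, hT]
    have hsum : Summable (Δ.choice σ π w (X :: β)) := by
      by_contra h
      simpa [tsum_eq_zero_of_not_summable h] using Δ.tsum_choice (σ := σ) (π := π) w X β
    calc Δ.reachN σ π T (n + 1) w (X :: β)
        ≤ ∑ α ∈ Δ.rules X, Δ.choice σ π w (X :: β) α := by
          rw [Δ.reachN_succ_cons hT]
          exact Finset.sum_le_sum fun α _ => mul_le_of_le_one_right (Δ.choice_nonneg ..) (ih ..)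
      _ ≤ ∑' α, Δ.choice σ π w (X :: β) α :=
          hsum.sum_le_tsum _ fun α _ => Δ.choice_nonneg ..
      _ = 1 := Δ.tsum_choice w X β

end Play

section Avoid

variable {σ : Δ.Strat Δ.isBox} {π : Δ.Strat Δ.isDiamond} {T : Set (List Γ)}
  {w : List (List Γ)} {c : List Γ}

def Avoids (σ : Δ.Strat Δ.isBox) (π : Δ.Strat Δ.isDiamond) (T : Set (List Γ))
    (w : List (List Γ)) (c : List Γ) : Prop :=
  ∀ n, Δ.reachN σ π T n w c = 0

lemma bddAbove_range_reachN : BddAbove (Set.range fun n => Δ.reachN σ π T n [] c) :=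
  ⟨1, Set.forall_mem_range.mpr fun n => Δ.reachN_le_one n [] c⟩

lemma reachP_eq_zero_iff : Δ.reachP σ π T c = 0 ↔ Δ.Avoids σ π T [] c := by
  refine ⟨fun h n => le_antisymm ?_ (Δ.reachN_nonneg n [] c), fun h => ?_⟩
  · exact h ▸ le_ciSup Δ.bddAbove_range_reachN n
  · simp only [reachP, h _, ciSup_const]

lemma reachP_pos_iff : 0 < Δ.reachP σ π T c ↔ ¬ Δ.Avoids σ π T [] c := by
  rw [← reachP_eq_zero_iff, lt_iff_le_and_ne, ne_comm, and_iff_right]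
  exact (Δ.reachN_nonneg 0 [] c).trans (le_ciSup Δ.bddAbove_range_reachN 0)

variable {Δ} in
lemma Avoids.not_mem (h : Δ.Avoids σ π T w c) : c ∉ T := fun hc => by
  simpa [reachN, hc] using h 0

variable {Δ} in
lemma Avoids.step {X : Γ} {β α : List Γ} (h : Δ.Avoids σ π T w (X :: β)) (hα : Δ.rule X α)
    (hpos : 0 < Δ.choice σ π w (X :: β) α) : Δ.Avoids σ π T (w ++ [X :: β]) (α ++ β) := by
  intro n
  have hsum := h (n + 1)
  rw [Δ.reachN_succ_cons h.not_mem, Finset.sum_eq_zero_iff_of_nonneg fun α _ =>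
    mul_nonneg (Δ.choice_nonneg ..) (Δ.reachN_nonneg ..)] at hsum
  exact (mul_eq_zero.mp (hsum α (Δ.mem_rules.mpr hα))).resolve_left hpos.ne'

lemma avoids_nil (hT : [] ∉ T) (w : List (List Γ)) : Δ.Avoids σ π T w [] := fun n => by
  rw [reachN_nil, if_neg hT]

/-- Coinduction for `Avoids`, up to `Avoids`. -/
lemma avoids_of_closed (R : List (List Γ) → List Γ → Prop) (hnil : ∀ w, R w [] → [] ∉ T)
    (hcons : ∀ w X β, R w (X :: β) → X :: β ∉ T ∧ ∀ α, Δ.rule X α →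
      0 < Δ.choice σ π w (X :: β) α →
        R (w ++ [X :: β]) (α ++ β) ∨ Δ.Avoids σ π T (w ++ [X :: β]) (α ++ β))
    (h : R w c) : Δ.Avoids σ π T w c := by
  suffices ∀ n w c, R w c ∨ Δ.Avoids σ π T w c → Δ.reachN σ π T n w c = 0 from
    fun n => this n w c (Or.inl h)
  intro n
  induction n with
  | zero =>
    rintro w c (h | h)
    · have : c ∉ T := by
        rcases c with _ | ⟨X, β⟩
        exacts [hnil w h, (hcons w X β h).1]
      simp [reachN, this]
    · exact h 0
  | succ n ih =>
    rintro w c (h | h)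
    · rcases c with _ | ⟨X, β⟩
      · exact Δ.avoids_nil (hnil w h) w (n + 1)
      obtain ⟨hT, hstep⟩ := hcons w X β h
      rw [Δ.reachN_succ_cons hT]
      refine Finset.sum_eq_zero fun α hα => ?_
      rcases (Δ.choice_nonneg w (X :: β) α).eq_or_lt with h0 | hpos
      · rw [← h0, zero_mul]
      · rw [ih _ _ (hstep α (Δ.mem_rules.mp hα) hpos), mul_zero]
    · exact h (n + 1)

lemma reachN_congr {σ₁ σ₂ : Δ.Strat Δ.isBox} {π₁ π₂ : Δ.Strat Δ.isDiamond}
    (R : List (List Γ) → List (List Γ) → List Γ → Prop)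
    (hchoice : ∀ w₁ w₂ X β, R w₁ w₂ (X :: β) →
      Δ.choice σ₁ π₁ w₁ (X :: β) = Δ.choice σ₂ π₂ w₂ (X :: β))
    (hstep : ∀ w₁ w₂ c c', R w₁ w₂ c → R (w₁ ++ [c]) (w₂ ++ [c]) c')
    (n : ℕ) {w₁ w₂ : List (List Γ)} {c : List Γ} (h : R w₁ w₂ c) :
    Δ.reachN σ₁ π₁ T n w₁ c = Δ.reachN σ₂ π₂ T n w₂ c := by
  induction n generalizing w₁ w₂ c with
  | zero => rfl
  | succ n ih =>
    rcases c with _ | ⟨X, β⟩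
    · rw [reachN_nil, reachN_nil]
    by_cases hT : X :: β ∈ T
    · simp [reachN, hT]
    rw [Δ.reachN_succ_cons hT, Δ.reachN_succ_cons hT]
    exact Finset.sum_congr rfl fun α _ => by
      rw [hchoice _ _ X β h, ih (hstep _ _ _ _ h)]

lemma avoids_congr {σ₁ σ₂ : Δ.Strat Δ.isBox} {π₁ π₂ : Δ.Strat Δ.isDiamond}
    (R : List (List Γ) → List (List Γ) → List Γ → Prop)
    (hchoice : ∀ w₁ w₂ X β, R w₁ w₂ (X :: β) →
      Δ.choice σ₁ π₁ w₁ (X :: β) = Δ.choice σ₂ π₂ w₂ (X :: β))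
    (hstep : ∀ w₁ w₂ c c', R w₁ w₂ c → R (w₁ ++ [c]) (w₂ ++ [c]) c')
    {w₁ w₂ : List (List Γ)} {c : List Γ} (h : R w₁ w₂ c) :
    Δ.Avoids σ₁ π₁ T w₁ c ↔ Δ.Avoids σ₂ π₂ T w₂ c :=
  forall_congr' fun n => by rw [Δ.reachN_congr R hchoice hstep n h]

lemma mem_WBoxPos_iff : c ∈ Δ.WBoxPos T ↔ ∃ σ, ∀ π, ¬ Δ.Avoids σ π T [] c := by
  simp only [WBoxPos, Set.mem_ofPred_eq, reachP_pos_iff]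

lemma mem_WDiaZero_iff : c ∈ Δ.WDiaZero T ↔ ∃ π, ∀ σ, Δ.Avoids σ π T [] c := by
  simp only [WDiaZero, Set.mem_ofPred_eq, reachP_eq_zero_iff]

end Avoid

namespace Strat

variable {Δ : BPA Γ} {own : Γ → Prop}

def strip (τ : Δ.Strat own) (γ : List Γ) : Δ.Strat own where
  f w c α := τ.f (w.map (· ++ γ)) (c ++ γ) α
  nonneg _ _ _ := τ.nonneg ..
  supp _ X β α := τ.supp _ X (β ++ γ) α
  sum_one _ X β := τ.sum_one _ X (β ++ γ)

/-- `τ` played above the last `γ.length` symbols of the stack; the top symbol is always kept, so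
that `τ` is consulted on a configuration with the same top symbol. -/
def lift (τ : Δ.Strat own) (γ : List Γ) : Δ.Strat own where
  f w c α := match c with
    | [] => 0
    | X :: β => τ.f (w.map (·.rdrop γ.length)) (X :: β.rdrop γ.length) α
  nonneg w c α := by
    rcases c with _ | ⟨X, β⟩
    exacts [le_rfl, τ.nonneg ..]
  supp _ X _ α := τ.supp _ X _ α
  sum_one _ X _ := τ.sum_one _ X _

def shift (τ : Δ.Strat own) (w₀ : List (List Γ)) : Δ.Strat own where
  f w c α := τ.f (w₀ ++ w) c α
  nonneg _ _ _ := τ.nonneg ..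
  supp _ := τ.supp _
  sum_one _ := τ.sum_one _

/-- Play `τ₁` above `γ` until the stack first equals `γ`, then `τ₂` with the history since then. -/
noncomputable def seq (τ₁ τ₂ : Δ.Strat own) (γ : List Γ) : Δ.Strat own where
  f w c α := if γ ∈ w ++ [c] then τ₂.f (w.dropWhile (· ≠ γ)) c α else (τ₁.lift γ).f w c α
  nonneg w c α := by
    split_ifs
    exacts [τ₂.nonneg .., (τ₁.lift γ).nonneg ..]
  supp w X β α hX := by
    split_ifs
    exacts [τ₂.supp _ X β α hX, (τ₁.lift γ).supp w X β α hX]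
  sum_one w X β hX := by
    split_ifs
    exacts [τ₂.sum_one _ X β hX, (τ₁.lift γ).sum_one w X β hX]

lemma lift_f_append (τ : Δ.Strat own) (γ : List Γ) (w : List (List Γ)) (X : Γ)
    (β α : List Γ) : (τ.lift γ).f (w.map (· ++ γ)) (X :: (β ++ γ)) α = τ.f w (X :: β) α := by
  simp [lift, Function.comp_def]

lemma seq_f_append (τ₁ τ₂ : Δ.Strat own) {γ : List Γ} {w : List (List Γ)}
    (hw : ∀ e ∈ w, e ≠ []) (X : Γ) (β α : List Γ) :
    (τ₁.seq τ₂ γ).f (w.map (· ++ γ)) (X :: (β ++ γ)) α = τ₁.f w (X :: β) α := by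
  have hγ : γ ∉ w.map (· ++ γ) ++ [X :: (β ++ γ)] := by
    rw [List.mem_append, List.mem_singleton, not_or]
    refine ⟨fun h => forall_mem_map_append_ne hw γ h rfl, fun h => ?_⟩
    have := congrArg List.length h
    simp at this
    omega
  simp only [seq, if_neg hγ]
  exact τ₁.lift_f_append γ w X β α

lemma seq_f_of_head (τ₁ τ₂ : Δ.Strat own) {γ : List Γ} {w₀ w : List (List Γ)} {c : List Γ}
    (hw₀ : ∀ e ∈ w₀, e ≠ γ) (hw : (w ++ [c]).head? = some γ) (α : List Γ) :
    (τ₁.seq τ₂ γ).f (w₀ ++ w) c α = τ₂.f w c α := by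
  have hγ : γ ∈ w₀ ++ w ++ [c] := by
    rw [List.append_assoc]
    exact List.mem_append_right _ (List.mem_of_mem_head? hw)
  have hdrop : w.dropWhile (· ≠ γ) = w := by
    rcases w with _ | ⟨e, t⟩
    · rfl
    · obtain rfl : e = γ := by simpa using hw
      simp
  simp only [seq, if_pos hγ, List.dropWhile_append_of_pos (p := (· ≠ γ)) (by simpa using hw₀),
    hdrop]

end Strat

section Suffix

variable {σ σ' : Δ.Strat Δ.isBox} {π π' : Δ.Strat Δ.isDiamond} {S : Set Γ} {T : Set (List Γ)}
  {γ : List Γ} {w₀ w : List (List Γ)} {c : List Γ}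

lemma avoids_seq_right_iff {π₁ π₂ : Δ.Strat Δ.isDiamond} (hw₀ : ∀ e ∈ w₀, e ≠ γ) :
    Δ.Avoids σ (π₁.seq π₂ γ) T w₀ γ ↔ Δ.Avoids (σ.shift w₀) π₂ T [] γ :=
  Δ.avoids_congr (fun w₁ w₂ c => w₁ = w₀ ++ w₂ ∧ (w₂ ++ [c]).head? = some γ)
    (by rintro _ w X β ⟨rfl, hw⟩; exact Δ.choice_congr (fun _ => rfl) (π₁.seq_f_of_head π₂ hw₀ hw))
    (by rintro _ w c c' ⟨rfl, hw⟩; exact ⟨List.append_assoc .., by rw [List.head?_append, hw]; rfl⟩)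
    ⟨(List.append_nil w₀).symm, rfl⟩

lemma avoids_seq_left_iff {σ₁ σ₂ : Δ.Strat Δ.isBox} (hw₀ : ∀ e ∈ w₀, e ≠ γ) :
    Δ.Avoids (σ₁.seq σ₂ γ) π T w₀ γ ↔ Δ.Avoids σ₂ (π.shift w₀) T [] γ :=
  Δ.avoids_congr (fun w₁ w₂ c => w₁ = w₀ ++ w₂ ∧ (w₂ ++ [c]).head? = some γ)
    (by rintro _ w X β ⟨rfl, hw⟩; exact Δ.choice_congr (σ₁.seq_f_of_head σ₂ hw₀ hw) (fun _ => rfl))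
    (by rintro _ w c c' ⟨rfl, hw⟩; exact ⟨List.append_assoc .., by rw [List.head?_append, hw]; rfl⟩)
    ⟨(List.append_nil w₀).symm, rfl⟩

/-- While its stack is nonempty, a play of `(σ, π)` from `c` is followed by a play of `(σ', π')`
from `c ++ γ` (`hagree`); `hbdry` covers the moment the stack empties, when the latter is at `γ`. -/
lemma avoids_append_of_avoids (hT : ∀ c ∈ topLang S, c ∈ T)
    (hagree : ∀ w, (∀ e ∈ w, e ≠ []) → ∀ X β,
      Δ.choice σ' π' (w.map (· ++ γ)) (X :: (β ++ γ)) = Δ.choice σ π w (X :: β))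
    (hbdry : ∀ w, (∀ e ∈ w, e ≠ []) → Δ.Avoids σ π T w [] →
      Δ.Avoids σ' π' (topLang S) (w.map (· ++ γ)) γ)
    (hw : ∀ e ∈ w, e ≠ []) (hc : c ≠ []) (h : Δ.Avoids σ π T w c) :
    Δ.Avoids σ' π' (topLang S) (w.map (· ++ γ)) (c ++ γ) := by
  refine Δ.avoids_of_closed (fun w' c' => ∃ w c, w' = w.map (· ++ γ) ∧ c' = c ++ γ ∧
      (∀ e ∈ w, e ≠ []) ∧ c ≠ [] ∧ Δ.Avoids σ π T w c) ?_ ?_ ⟨w, c, rfl, rfl, hw, hc, h⟩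
  · rintro _ ⟨w, c, -, hc', -, hc, -⟩
    exact absurd (List.append_eq_nil_iff.mp hc'.symm).1 hc
  · rintro _ X β' ⟨w, c, rfl, hc', hw, hc, h⟩
    obtain ⟨Y, β, rfl⟩ := List.exists_cons_of_ne_nil hc
    simp only [List.cons_append, List.cons.injEq] at hc'
    obtain ⟨rfl, rfl⟩ := hc'
    refine ⟨fun hmem => h.not_mem (hT _ (cons_mem_topLang.mpr (cons_mem_topLang.mp hmem))),
      fun α hα hpos => ?_⟩
    rw [hagree w hw] at hpos
    have hstep := h.step hα hpos
    have hw' : ∀ e ∈ w ++ [X :: β], e ≠ [] := List.forall_mem_append.mpr ⟨hw, by simp⟩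
    by_cases hnil : α ++ β = []
    · obtain ⟨rfl, rfl⟩ := List.append_eq_nil_iff.mp hnil
      exact Or.inr (by simpa using hbdry _ hw' hstep)
    · exact Or.inl ⟨_, _, by simp, by simp, hw', hnil, hstep⟩

lemma avoids_of_avoids_append (hT : T ⊆ topLang S ∪ {[]})
    (hagree : ∀ w, (∀ e ∈ w, e ≠ []) → ∀ X β,
      Δ.choice σ' π' (w.map (· ++ γ)) (X :: (β ++ γ)) = Δ.choice σ π w (X :: β))
    (hbdry : ∀ w, (∀ e ∈ w, e ≠ []) → Δ.Avoids σ' π' (topLang S) (w.map (· ++ γ)) γ →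
      Δ.Avoids σ π T w [])
    (hw : ∀ e ∈ w, e ≠ []) (hc : c ≠ [])
    (h : Δ.Avoids σ' π' (topLang S) (w.map (· ++ γ)) (c ++ γ)) :
    Δ.Avoids σ π T w c := by
  refine Δ.avoids_of_closed (fun w c => (∀ e ∈ w, e ≠ []) ∧ c ≠ [] ∧
      Δ.Avoids σ' π' (topLang S) (w.map (· ++ γ)) (c ++ γ)) (fun _ h => absurd rfl h.2.1) ?_
    ⟨hw, hc, h⟩
  rintro w X β ⟨hw, -, h⟩
  rw [List.cons_append] at h
  refine ⟨fun hmem => ?_, fun α hα hpos => ?_⟩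
  · rcases hT hmem with hmem | hmem
    · exact h.not_mem (cons_mem_topLang.mpr (cons_mem_topLang.mp hmem))
    · exact List.cons_ne_nil _ _ hmem
  rw [← hagree w hw] at hpos
  have hstep := h.step hα hpos
  rw [show w.map (· ++ γ) ++ [X :: (β ++ γ)] = (w ++ [X :: β]).map (· ++ γ) by simp,
    ← List.append_assoc] at hstep
  have hw' : ∀ e ∈ w ++ [X :: β], e ≠ [] := List.forall_mem_append.mpr ⟨hw, by simp⟩
  by_cases hnil : α ++ β = []
  · exact Or.inr (hnil ▸ hbdry _ hw' (by simpa [hnil] using hstep))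
  · exact Or.inl ⟨hw', hnil, hstep⟩

end Suffix

section Regions

variable {S : Set Γ} {X : Γ} {γ : List Γ}

lemma nil_mem_WDiaZero : [] ∈ Δ.WDiaZero (topLang S) :=
  Δ.mem_WDiaZero_iff.mpr ⟨Classical.arbitrary _, fun _ => Δ.avoids_nil nil_not_mem_topLang []⟩

lemma not_mem_WDiaZero_of_mem_WBoxPos {T : Set (List Γ)} {c : List Γ} (h : c ∈ Δ.WBoxPos T) :
    c ∉ Δ.WDiaZero T := fun hc => by
  obtain ⟨σ, hσ⟩ := Δ.mem_WBoxPos_iff.mp h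
  obtain ⟨π, hπ⟩ := Δ.mem_WDiaZero_iff.mp hc
  exact hσ π (hπ σ)

lemma cons_mem_WDiaZero (hX : [X] ∈ Δ.WDiaZero (topLang S))
    (hγ : γ ∈ Δ.WDiaZero (topLang S)) : X :: γ ∈ Δ.WDiaZero (topLang S) := by
  obtain ⟨π₁, h₁⟩ := Δ.mem_WDiaZero_iff.mp hX
  obtain ⟨π₂, h₂⟩ := Δ.mem_WDiaZero_iff.mp hγ
  refine Δ.mem_WDiaZero_iff.mpr ⟨π₁.seq π₂ γ, fun σ => ?_⟩
  exact Δ.avoids_append_of_avoids (σ := σ.strip γ) (fun _ => id)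
    (fun w hw X β => Δ.choice_congr (fun _ => rfl) (π₁.seq_f_append π₂ hw X β))
    (fun w hw _ => (Δ.avoids_seq_right_iff (forall_mem_map_append_ne hw)).mpr (h₂ _))
    (List.forall_mem_nil _) (List.cons_ne_nil _ _) (h₁ _)

lemma singleton_mem_WBoxPos_of_cons (h : X :: γ ∈ Δ.WBoxPos (topLang S)) :
    [X] ∈ Δ.WBoxPos (topLang S ∪ {[]}) := by
  obtain ⟨σ, hσ⟩ := Δ.mem_WBoxPos_iff.mp h
  refine Δ.mem_WBoxPos_iff.mpr ⟨σ.strip γ, fun π hπ => hσ (π.lift γ) ?_⟩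
  exact Δ.avoids_append_of_avoids (T := topLang S ∪ {[]}) (fun _ => Or.inl)
    (fun w _ X β => Δ.choice_congr (fun _ => rfl) (π.lift_f_append γ w X β))
    (fun _ _ h => absurd (Or.inr rfl) h.not_mem) (List.forall_mem_nil _)
    (List.cons_ne_nil _ _) hπ

lemma cons_mem_WBoxPos_of_singleton (h : [X] ∈ Δ.WBoxPos (topLang S)) (γ : List Γ) :
    X :: γ ∈ Δ.WBoxPos (topLang S) := by
  obtain ⟨σ, hσ⟩ := Δ.mem_WBoxPos_iff.mp h
  refine Δ.mem_WBoxPos_iff.mpr ⟨σ.lift γ, fun π hπ => hσ (π.strip γ) ?_⟩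
  exact Δ.avoids_of_avoids_append (π' := π) (fun _ => Or.inl)
    (fun w _ X β => Δ.choice_congr (σ.lift_f_append γ w X β) (fun _ => rfl))
    (fun w _ _ => Δ.avoids_nil nil_not_mem_topLang w) (List.forall_mem_nil _)
    (List.cons_ne_nil _ _) hπ

lemma cons_mem_WBoxPos (hX : [X] ∈ Δ.WBoxPos (topLang S ∪ {[]}))
    (hγ : γ ∈ Δ.WBoxPos (topLang S)) : X :: γ ∈ Δ.WBoxPos (topLang S) := by
  obtain ⟨σ₁, h₁⟩ := Δ.mem_WBoxPos_iff.mp hX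
  obtain ⟨σ₂, h₂⟩ := Δ.mem_WBoxPos_iff.mp hγ
  refine Δ.mem_WBoxPos_iff.mpr ⟨σ₁.seq σ₂ γ, fun π hπ => h₁ (π.strip γ) ?_⟩
  exact Δ.avoids_of_avoids_append (π' := π) subset_rfl
    (fun w hw X β => Δ.choice_congr (σ₁.seq_f_append σ₂ hw X β) (fun _ => rfl))
    (fun w hw h => absurd ((Δ.avoids_seq_left_iff (forall_mem_map_append_ne hw)).mp h) (h₂ _))
    (List.forall_mem_nil _) (List.cons_ne_nil _ _) hπ

lemma append_mem_WDiaZero {u : List Γ} (hu : ∀ x ∈ u, [x] ∈ Δ.WDiaZero (topLang S))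
    (hγ : γ ∈ Δ.WDiaZero (topLang S)) : u ++ γ ∈ Δ.WDiaZero (topLang S) := by
  induction u with
  | nil => exact hγ
  | cons x u ih =>
    rw [List.forall_mem_cons] at hu
    exact Δ.cons_mem_WDiaZero hu.1 (ih hu.2)

lemma append_mem_WBoxPos {u : List Γ} (hu : ∀ x ∈ u, [x] ∈ Δ.WBoxPos (topLang S ∪ {[]}))
    (hγ : γ ∈ Δ.WBoxPos (topLang S)) : u ++ γ ∈ Δ.WBoxPos (topLang S) := by
  induction u with
  | nil => exact hγ
  | cons x u ih =>
    rw [List.forall_mem_cons] at hu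
    exact Δ.cons_mem_WBoxPos hu.1 (ih hu.2)

end Regions

end BPA

/-- `W_Diamond(T,=0) = (B∖A)* ∪ (B∖A)*(Γ∖B)Γ*` where `A = W_Box(T,>0) ∩ Γ`
and `B = W_Box(T_ε,>0) ∩ Γ`, assuming determinacy. -/
theorem WDiaZero_eq {Γ : Type*} [Fintype Γ] (Δ : BPA Γ) (ΓT : Set Γ)
    (A B : Set Γ)
    (hA : A = {X | [X] ∈ Δ.WBoxPos (topLang ΓT)})
    (hB : B = {X | [X] ∈ Δ.WBoxPos (topLang ΓT ∪ {([] : List Γ)})})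
    (hdet : ∀ c : List Γ, c ∈ Δ.WBoxPos (topLang ΓT) ∨ c ∈ Δ.WDiaZero (topLang ΓT)) :
    (Δ.WDiaZero (topLang ΓT) : Language Γ)
        = KStar.kstar (symLang (B \ A)) +
          KStar.kstar (symLang (B \ A)) * symLang (Set.univ \ B) * (⊤ : Language Γ) := by
  have memA (x : Γ) : x ∈ A ↔ [x] ∈ Δ.WBoxPos (topLang ΓT) := Set.ext_iff.mp hA x
  have memB (x : Γ) : x ∈ B ↔ [x] ∈ Δ.WBoxPos (topLang ΓT ∪ {[]}) := Set.ext_iff.mp hB x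
  have hsingle : ∀ x ∈ B \ A, [x] ∈ Δ.WDiaZero (topLang ΓT) :=
    fun x hx => (hdet [x]).resolve_left fun h => hx.2 ((memA x).mpr h)
  refine Set.ext fun c => Iff.trans ?_ mem_kstar_symLang_add_iff.symm
  constructor
  · intro hc
    rcases hfind : c.find? (· ∉ B \ A) with _ | Y
    · exact Or.inl (by simpa using hfind)
    obtain ⟨hY, u, v, rfl, hu⟩ := List.find?_eq_some_iff_append.mp hfind
    simp only [decide_eq_true_eq, Bool.not_eq_true', decide_eq_false_iff_not, not_not] at hY hu
    refine Or.inr ⟨u, Y, v, rfl, hu, trivial, fun hYB => ?_⟩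
    have hYA : Y ∈ A := not_not.mp fun hYA => hY ⟨hYB, hYA⟩
    refine Δ.not_mem_WDiaZero_of_mem_WBoxPos ?_ hc
    exact Δ.append_mem_WBoxPos (fun x hx => (memB x).mp (hu x hx).1)
      (Δ.cons_mem_WBoxPos_of_singleton ((memA Y).mp hYA) v)
  · rintro (hc | ⟨u, Y, v, rfl, hu, -, hY⟩)
    · simpa using Δ.append_mem_WDiaZero (fun x hx => hsingle x (hc x hx)) Δ.nil_mem_WDiaZero
    · exact Δ.append_mem_WDiaZero (fun x hx => hsingle x (hu x hx))
        ((hdet _).resolve_left fun h => hY ((memB Y).mpr (Δ.singleton_mem_WBoxPos_of_cons h)))
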